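/- arXiv:1605.06886 — 4 statements merged into one kernel-verified Lean document; each statement's English description precedes it below -/
import Mathlib

section
/- (Proposition 1: expected total volume of patches.) Let θ ∈ [0,1] be real, τ > 0 real, D a positive integer, and N_1,…,N_D positive integers. Under the product over d = 1,…,D of alternative-construction nonempty-patch distributions on dimension sizes N_d (the D side-lengths l_1,…,l_D being independent), the expected volume of a single patch satisfies E[∏_{d=1}^D l_d] = ∏_{d=1}^D N_d/(θ+(1−θ)·N_d); consequently, with expected number of nonempty patches E(K_τ) = τ·∏_{d=1}^D (θ+(1−θ)·N_d), one has E(K_τ)·E[∏_{d=1}^D l_d] = τ·∏_{d=1}^D N_d. -/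
/-- Initial-position weight: `w θ 1 = 1`, `w θ s = 1 - θ` for `s ≥ 2`. -/
noncomputable def w (θ : ℝ) (s : ℕ) : ℝ := if s = 1 then 1 else 1 - θ

/-- Truncated geometric side-length distribution on dimension size `N` given start `s`. -/
noncomputable def q (θ : ℝ) (N s l : ℕ) : ℝ :=
  if l = N - s + 1 then θ ^ (N - s) else θ ^ (l - 1) * (1 - θ)

/-- The alternative-construction nonempty-patch distribution on dimension size `N`:
mass `w(s)·q(l|s)/(θ+(1−θ)·N)` on pairs `(s,l)` with `1 ≤ s ≤ N`, `1 ≤ l ≤ N − s + 1`. -/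
noncomputable def altP (θ : ℝ) (N : ℕ) (p : ℕ × ℕ) : ℝ :=
  if 1 ≤ p.1 ∧ p.1 ≤ N ∧ 1 ≤ p.2 ∧ p.2 ≤ N - p.1 + 1 then
    w θ p.1 * q θ N p.1 p.2 / (θ + (1 - θ) * N)
  else 0

/-!
In one dimension, the length given the start `s` is a geometric variable truncated at
`m = N - s + 1`, so its mean is `∑_{k<m} θ^k`. Weighting by `w`, the terms
`(1 - θ) ∑_{k<j} θ^k = 1 - θ^j` for `s ≥ 2` telescope against the `s = 1` term, leaving the
unnormalised mean `N`. The volume is a product of independent side lengths, so its mean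
factorises over the dimensions, and the normalisers cancel against `E(K_τ)`.
-/

open Finset

lemma sum_Icc_pow_mul_one_sub_mul_add_pow_mul (θ : ℝ) (n : ℕ) :
    ∑ l ∈ Icc 1 n, θ ^ (l - 1) * (1 - θ) * l + θ ^ n * (n + 1)
      = ∑ k ∈ range (n + 1), θ ^ k := by
  induction n with
  | zero => simp
  | succ n ih =>
    rw [sum_Icc_succ_top (by omega), sum_range_succ, ← ih]
    push_cast
    ring

lemma sum_Icc_q_mul (θ : ℝ) (N s : ℕ) :
    ∑ l ∈ Icc 1 (N - s + 1), q θ N s l * l = ∑ k ∈ range (N - s + 1), θ ^ k := by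
  rw [sum_Icc_succ_top (by omega), ← sum_Icc_pow_mul_one_sub_mul_add_pow_mul]
  congr 1
  · refine sum_congr rfl fun l hl => ?_
    rw [q, if_neg (by simp at hl; omega)]
  · simp [q]

lemma sum_Icc_w_mul_geom_sum (θ : ℝ) (N : ℕ) :
    ∑ s ∈ Icc 1 N, w θ s * ∑ k ∈ range (N - s + 1), θ ^ k = N := by
  rcases N with _ | n
  · simp
  set F := fun s => w θ s * ∑ k ∈ range (n + 1 - s + 1), θ ^ k
  have hreflect : ∑ s ∈ Icc 1 (n + 1), F s = ∑ j ∈ range (n + 1), F (n + 1 - j) := by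
    rw [range_eq_Ico, sum_Ico_reflect F 0 (by omega : n + 1 ≤ n + 1 + 1)]
    congr 1
    ext
    simp only [mem_Icc, mem_Ico]
    omega
  have hgeom : ∀ j ∈ range n, F (n + 1 - j) = 1 - θ ^ (j + 1) := by
    intro j hj
    rw [mem_range] at hj
    simp only [F]
    rw [w, if_neg (by omega), show n + 1 - (n + 1 - j) + 1 = j + 1 by omega, mul_comm,
      geom_sum_mul_neg]
  have hfirst : F (n + 1 - n) = ∑ k ∈ range (n + 1), θ ^ k := by
    simp only [F, w, show n + 1 - n = 1 by omega, if_true, one_mul, Nat.add_sub_cancel]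
  rw [hreflect, sum_range_succ, sum_congr rfl hgeom, hfirst, sum_sub_distrib, sum_const,
    card_range, sum_range_succ' (fun k => θ ^ k)]
  push_cast
  ring

lemma sum_altP_mul_snd (θ : ℝ) (N : ℕ) :
    ∑ p ∈ Icc 1 N ×ˢ Icc 1 N, altP θ N p * p.2 = N / (θ + (1 - θ) * N) := by
  have hrow : ∀ s ∈ Icc 1 N, ∑ l ∈ Icc 1 N, altP θ N (s, l) * l
      = w θ s * (∑ k ∈ range (N - s + 1), θ ^ k) / (θ + (1 - θ) * N) := by
    intro s hs
    rw [mem_Icc] at hs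
    rw [← sum_subset (Icc_subset_Icc_right (by omega : N - s + 1 ≤ N)), ← sum_Icc_q_mul,
      mul_sum, sum_div]
    · refine sum_congr rfl fun l hl => ?_
      rw [mem_Icc] at hl
      rw [altP, if_pos ⟨hs.1, hs.2, hl.1, hl.2⟩]
      ring
    · intro l hl hl'
      simp only [mem_Icc] at hl hl'
      rw [altP, if_neg (by omega), zero_mul]
  rw [sum_product, sum_congr rfl hrow, ← sum_div, sum_Icc_w_mul_geom_sum]

lemma sum_piFinset_prod_mul_prod {ι : Type*} [Fintype ι] [DecidableEq ι] {κ : ι → Type*}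
    {R : Type*} [CommSemiring R] (t : (i : ι) → Finset (κ i)) (p g : (i : ι) → κ i → R) :
    ∑ f ∈ Fintype.piFinset t, (∏ i, p i (f i)) * ∏ i, g i (f i)
      = ∏ i, ∑ x ∈ t i, p i x * g i x := by
  simp only [prod_univ_sum, prod_mul_distrib]

theorem spp_expected_total_volume_general (θ τ : ℝ) (hθ1 : θ ≤ 1)
    (D : ℕ) (N : Fin D → ℕ) (hN : ∀ d, 0 < N d) :
    (∑ f ∈ Fintype.piFinset (fun d => Finset.Icc 1 (N d) ×ˢ Finset.Icc 1 (N d)),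
        (∏ d, altP θ (N d) (f d)) * ∏ d, ((f d).2 : ℝ))
      = ∏ d, (N d : ℝ) / (θ + (1 - θ) * N d) ∧
    (τ * ∏ d, (θ + (1 - θ) * N d)) *
      (∑ f ∈ Fintype.piFinset (fun d => Finset.Icc 1 (N d) ×ˢ Finset.Icc 1 (N d)),
        (∏ d, altP θ (N d) (f d)) * ∏ d, ((f d).2 : ℝ))
      = τ * ∏ d, (N d : ℝ) := by
  have hvolume : (∑ f ∈ Fintype.piFinset (fun d => Icc 1 (N d) ×ˢ Icc 1 (N d)),
      (∏ d, altP θ (N d) (f d)) * ∏ d, ((f d).2 : ℝ))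
        = ∏ d, (N d : ℝ) / (θ + (1 - θ) * N d) := by
    rw [sum_piFinset_prod_mul_prod _ (fun d => altP θ (N d)) fun _ p => (p.2 : ℝ)]
    exact prod_congr rfl fun d _ => sum_altP_mul_snd θ (N d)
  refine ⟨hvolume, ?_⟩
  rw [hvolume, mul_assoc, ← prod_mul_distrib]
  congr 1
  refine prod_congr rfl fun d _ => mul_div_cancel₀ _ ?_
  have hNd : (1 : ℝ) ≤ N d := by exact_mod_cast hN d
  nlinarith

/-- Proposition 1: under the product over `d = 1,…,D` of alternative-construction
nonempty-patch distributions on sizes `N_d`, the expected volume of a single patch is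
`E[∏_d l_d] = ∏_d N_d/(θ+(1−θ)·N_d)`; consequently, with
`E(K_τ) = τ·∏_d (θ+(1−θ)·N_d)`, one has `E(K_τ)·E[∏_d l_d] = τ·∏_d N_d`. -/
theorem spp_expected_total_volume (θ τ : ℝ) (hθ0 : 0 ≤ θ) (hθ1 : θ ≤ 1) (hτ : 0 < τ)
    (D : ℕ) (hD : 0 < D) (N : Fin D → ℕ) (hN : ∀ d, 0 < N d) :
    (∑ f ∈ Fintype.piFinset (fun d => Finset.Icc 1 (N d) ×ˢ Finset.Icc 1 (N d)),
        (∏ d, altP θ (N d) (f d)) * ∏ d, ((f d).2 : ℝ))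
      = ∏ d, (N d : ℝ) / (θ + (1 - θ) * N d) ∧
    (τ * ∏ d, (θ + (1 - θ) * N d)) *
      (∑ f ∈ Fintype.piFinset (fun d => Finset.Icc 1 (N d) ×ˢ Finset.Icc 1 (N d)),
        (∏ d, altP θ (N d) (f d)) * ∏ d, ((f d).2 : ℝ))
      = τ * ∏ d, (N d : ℝ) :=
  spp_expected_total_volume_general θ τ hθ1 D N hN
end

section
/- (Proposition 2, initial-boundary case, one dimension.) Let θ ∈ [0,1] be real and N a positive integer. Let Y = {1,…,N+1} and X = {1,…,N}. Under the original-construction candidate-patch distribution on dimension size N+1, the probability that the patch interval {s,…,s+l−1} intersects X — equivalently, that l ≥ 1 and s ≤ N — equals (θ+(1−θ)·N)/(N+1). Consequently (N+1)·P_Y(restriction to X nonempty) = N·P_X(side-length positive) = θ+(1−θ)·N, where P_X denotes the original-construction candidate-patch distribution on dimension size N. -/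
/-! Summing out the side-length leaves only the start factor `c θ s`, because the truncated
geometric law `q θ M s` has total mass one on `{1, …, M - s + 1}`. Both probabilities thus
reduce to `(∑_{s ≤ N} c θ s) / M = (θ + (1 - θ) N) / M`, with `M = N + 1` for `Y` (starts
beyond `X` are excluded) and `M = N` for `X`. -/

/-- Initial-position factor `c`: `c θ 1 = 1`, `c θ s = 1 - θ` for `s ≥ 2`. -/
noncomputable def c (θ : ℝ) (s : ℕ) : ℝ := if s = 1 then 1 else 1 - θ

/-- Conditional law of the side-length `l` given the start `s` in the original construction. -/
noncomputable def condL (θ : ℝ) (N s l : ℕ) : ℝ :=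
  if l = 0 then (if s = 1 then 0 else θ) else c θ s * q θ N s l

/-- The original-construction candidate-patch distribution on dimension size `N`. -/
noncomputable def origP (θ : ℝ) (N : ℕ) (p : ℕ × ℕ) : ℝ :=
  if 1 ≤ p.1 ∧ p.1 ≤ N ∧ p.2 ≤ N - p.1 + 1 then (1 / (N : ℝ)) * condL θ N p.1 p.2 else 0

open Finset

lemma sum_Icc_one_pow_pred_mul_one_sub (θ : ℝ) (K : ℕ) :
    ∑ l ∈ Icc 1 K, θ ^ (l - 1) * (1 - θ) = 1 - θ ^ K := by
  induction K with
  | zero => simp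
  | succ K ih =>
    rw [sum_Icc_succ_top (by omega), ih, Nat.add_sub_cancel]
    ring

lemma sum_q_eq_one (θ : ℝ) (M s : ℕ) : ∑ l ∈ Icc 1 (M - s + 1), q θ M s l = 1 := by
  have h_geom : ∀ l ∈ Icc 1 (M - s), q θ M s l = θ ^ (l - 1) * (1 - θ) := fun l hl => by
    rw [q, if_neg (by simp only [mem_Icc] at hl; omega)]
  rw [sum_Icc_succ_top (by omega), sum_congr rfl h_geom, sum_Icc_one_pow_pred_mul_one_sub, q,
    if_pos rfl]
  ring

lemma sum_condL_eq_c (θ : ℝ) (M s : ℕ) : ∑ l ∈ Icc 1 (M - s + 1), condL θ M s l = c θ s := by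
  have h : ∀ l ∈ Icc 1 (M - s + 1), condL θ M s l = c θ s * q θ M s l := fun l hl => by
    rw [condL, if_neg (by simp only [mem_Icc] at hl; omega)]
  rw [sum_congr rfl h, ← mul_sum, sum_q_eq_one, mul_one]

lemma sum_c_Icc_one (θ : ℝ) {M : ℕ} (hM : 0 < M) :
    ∑ s ∈ Icc 1 M, c θ s = θ + (1 - θ) * M := by
  induction M, hM using Nat.le_induction with
  | base => simp [c]
  | succ M hM ih =>
    rw [sum_Icc_succ_top (by omega), ih, c, if_neg (by omega)]
    push_cast
    ring

lemma sum_origP_pos_length (θ : ℝ) {K M : ℕ} (hKM : K ≤ M) :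
    ∑ s ∈ Icc 1 K, ∑ l ∈ Icc 1 (M - s + 1), origP θ M (s, l) = (∑ s ∈ Icc 1 K, c θ s) / M := by
  rw [sum_div]
  refine sum_congr rfl fun s hs => ?_
  simp only [mem_Icc] at hs
  have h : ∀ l ∈ Icc 1 (M - s + 1), origP θ M (s, l) = 1 / (M : ℝ) * condL θ M s l :=
    fun l hl => by rw [origP, if_pos ⟨hs.1, by omega, (mem_Icc.mp hl).2⟩]
  rw [sum_congr rfl h, ← mul_sum, sum_condL_eq_c, one_div_mul_eq_div]

lemma sum_ite_pos_length_of_le (f : ℕ → ℕ → ℝ) (K M : ℕ) :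
    (∑ s ∈ Icc 1 (K + 1), ∑ l ∈ Icc 0 (M - s + 1), if 1 ≤ l ∧ s ≤ K then f s l else 0)
      = ∑ s ∈ Icc 1 K, ∑ l ∈ Icc 1 (M - s + 1), f s l := by
  calc _ = ∑ s ∈ Icc 1 (K + 1), if s ≤ K then ∑ l ∈ Icc 1 (M - s + 1), f s l else 0 := by
        refine sum_congr rfl fun s _ => ?_
        split_ifs with hs
        · simp only [hs, and_true]
          rw [← sum_filter]
          congr 1
          ext l
          simp only [mem_filter, mem_Icc]
          omega
        · simp [hs]
    _ = _ := by
        rw [← sum_filter]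
        congr 1
        ext s
        simp only [mem_filter, mem_Icc]
        omega

theorem spp_restriction_initial_boundary_general (θ : ℝ) (N : ℕ) (hN : 0 < N) :
    (∑ s ∈ Finset.Icc 1 (N + 1), ∑ l ∈ Finset.Icc 0 (N + 1 - s + 1),
        if 1 ≤ l ∧ s ≤ N then origP θ (N + 1) (s, l) else 0)
      = (θ + (1 - θ) * N) / ((N : ℝ) + 1) ∧
    ((N : ℝ) + 1) *
      (∑ s ∈ Finset.Icc 1 (N + 1), ∑ l ∈ Finset.Icc 0 (N + 1 - s + 1),
        if 1 ≤ l ∧ s ≤ N then origP θ (N + 1) (s, l) else 0)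
      = (N : ℝ) *
        (∑ s ∈ Finset.Icc 1 N, ∑ l ∈ Finset.Icc 1 (N - s + 1), origP θ N (s, l)) ∧
    (N : ℝ) * (∑ s ∈ Finset.Icc 1 N, ∑ l ∈ Finset.Icc 1 (N - s + 1), origP θ N (s, l))
      = θ + (1 - θ) * N := by
  have hY : (∑ s ∈ Icc 1 (N + 1), ∑ l ∈ Icc 0 (N + 1 - s + 1),
        if 1 ≤ l ∧ s ≤ N then origP θ (N + 1) (s, l) else 0)
      = (θ + (1 - θ) * N) / ((N : ℝ) + 1) := by
    rw [sum_ite_pos_length_of_le, sum_origP_pos_length θ (Nat.le_succ N), sum_c_Icc_one θ hN,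
      Nat.cast_succ]
  have hX : (∑ s ∈ Icc 1 N, ∑ l ∈ Icc 1 (N - s + 1), origP θ N (s, l))
      = (θ + (1 - θ) * N) / N := by
    rw [sum_origP_pos_length θ le_rfl, sum_c_Icc_one θ hN]
  have hN0 : (N : ℝ) ≠ 0 := by positivity
  refine ⟨hY, ?_, ?_⟩
  · rw [hY, hX]
    field_simp
  · rw [hX]
    field_simp

/-- Proposition 2, initial-boundary case, one dimension: with `Y = {1,…,N+1}` and
`X = {1,…,N}`, under the original-construction candidate-patch distribution on size
`N+1`, the probability that the patch interval `{s,…,s+l−1}` intersects `X`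
(i.e. `l ≥ 1` and `s ≤ N`) equals `(θ+(1−θ)·N)/(N+1)`.  Consequently
`(N+1)·P_Y(restriction to X nonempty) = N·P_X(side-length positive) = θ+(1−θ)·N`. -/
theorem spp_restriction_initial_boundary (θ : ℝ) (hθ0 : 0 ≤ θ) (hθ1 : θ ≤ 1)
    (N : ℕ) (hN : 0 < N) :
    (∑ s ∈ Finset.Icc 1 (N + 1), ∑ l ∈ Finset.Icc 0 (N + 1 - s + 1),
        if 1 ≤ l ∧ s ≤ N then origP θ (N + 1) (s, l) else 0)
      = (θ + (1 - θ) * N) / ((N : ℝ) + 1) ∧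
    ((N : ℝ) + 1) *
      (∑ s ∈ Finset.Icc 1 (N + 1), ∑ l ∈ Finset.Icc 0 (N + 1 - s + 1),
        if 1 ≤ l ∧ s ≤ N then origP θ (N + 1) (s, l) else 0)
      = (N : ℝ) *
        (∑ s ∈ Finset.Icc 1 N, ∑ l ∈ Finset.Icc 1 (N - s + 1), origP θ N (s, l)) ∧
    (N : ℝ) * (∑ s ∈ Finset.Icc 1 N, ∑ l ∈ Finset.Icc 1 (N - s + 1), origP θ N (s, l))
      = θ + (1 - θ) * N :=
  spp_restriction_initial_boundary_general θ N hN
end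

section
/- (Proposition 3, multi-dimensional version.) Let θ ∈ [0,1] be real, D a positive integer, N_1,…,N_D positive integers, and fix d' ∈ {1,…,D}. Let Y have dimension sizes M_d with M_d = N_d for d ≠ d' and M_{d'} = N_{d'}+1, and let X be embedded in Y agreeing in all dimensions d ≠ d' and, in dimension d', consisting either of the first N_{d'} positions or of the last N_{d'} positions. Sample a candidate patch on Y from the product over d of original-construction candidate-patch distributions on sizes M_d, and let π restrict it coordinatewise to X (in each dimension keeping the part of the interval {s_d,…,s_d+l_d−1} lying in X, re-indexed to {1,…,N_d}). Then for every D-tuple of pairs (s_d^X, l_d^X) with 1 ≤ s_d^X ≤ N_d and 1 ≤ l_d^X ≤ N_d−s_d^X+1 for all d: P_Y(π^{-1} of this patch | the restriction to X is nonempty in every dimension) = P_X(this patch | all side-lengths are positive), where P_X is the product over d of original-construction candidate-patch distributions on sizes N_d. -/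
/-!
Both sums factor over the dimensions, and so does the target probability. In a dimension
`d ≠ d'` the restriction is the identity. In dimension `d'` every patch `x` on `X` has a
`π`-preimage of mass `N/(N+1)` times its `X`-probability: with `X` the first `N` positions, a
patch reaching the end of `X` comes from one ending there or one cell later, and
`θ^k (1-θ) + θ^(k+1) = θ^k` recovers the truncated geometric tail; with `X` the last `N`
positions, a patch starting at the first position of `X` comes from one starting there (start
factor `1-θ`) or one starting a cell earlier and one cell longer (start factor `1`, one extra
factor `θ`), and `(1-θ) + θ = 1 = c θ 1`. Summing over the fibres, the conditioning event has
mass `N/(N+1)` times the total mass of positive-length `X`-patches, and the common factor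
cancels.
-/

open Finset

theorem Finset.sum_ite_eq_mul_sum_of_fibers {α β R : Type*} [DecidableEq β] [CommSemiring R]
    {A : Finset α} {B : Finset β} {E : α → Prop} [DecidablePred E] (π : α → β) {w : α → R}
    {Q : β → R} (κ : R) (hmaps : ∀ p ∈ A, E p → w p ≠ 0 → π p ∈ B)
    (hfiber : ∀ g ∈ B, ∑ p ∈ A, (if E p ∧ π p = g then w p else 0) = κ * Q g) :
    ∑ p ∈ A, (if E p then w p else 0) = κ * ∑ g ∈ B, Q g := by
  calc ∑ p ∈ A, (if E p then w p else 0)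
      = ∑ p ∈ A with E p, w p := (sum_filter _ _).symm
    _ = ∑ p ∈ A.filter E with π p ∈ B, w p :=
        (sum_filter_of_ne fun p hp => hmaps p (mem_filter.1 hp).1 (mem_filter.1 hp).2).symm
    _ = ∑ g ∈ B, ∑ p ∈ A.filter E with π p = g, w p :=
        (sum_fiberwise_eq_sum_filter _ _ _ _).symm
    _ = ∑ g ∈ B, κ * Q g :=
        sum_congr rfl fun g hg => by rw [← hfiber g hg, filter_filter, sum_filter]
    _ = κ * ∑ g ∈ B, Q g := (mul_sum _ _ _).symm

theorem Finset.sum_piFinset_ite_forall {ι R : Type*} [Fintype ι] [DecidableEq ι] [CommSemiring R]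
    {κ : ι → Type*} (A : ∀ i, Finset (κ i)) (P : ∀ i, κ i → Prop) [∀ i, DecidablePred (P i)]
    -- an arbitrary instance: over `Fin n` the `∀` is decided by `Nat.decidableForallFin`
    [∀ f : ∀ i, κ i, Decidable (∀ i, P i (f i))] (w : ∀ i, κ i → R) :
    ∑ f ∈ Fintype.piFinset A, (if ∀ i, P i (f i) then ∏ i, w i (f i) else 0)
      = ∏ i, ∑ a ∈ A i, if P i a then w i a else 0 := by
  rw [prod_univ_sum]
  refine sum_congr rfl fun f _ => ?_
  rw [Fintype.prod_ite_zero]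
  congr

section OneDimension

variable (θ : ℝ) {N s l : ℕ}

theorem c_succ (hs : 2 ≤ s) : c θ (s + 1) = c θ s := by
  rw [c, c, if_neg (by omega), if_neg (by omega)]

theorem q_succ_shift (hs : s ≤ N) : q θ (N + 1) (s + 1) l = q θ N s l := by
  rw [q, q, show N + 1 - (s + 1) = N - s by omega]

theorem q_succ_of_lt (h : l < N - s + 1) : q θ (N + 1) s l = q θ N s l := by
  rw [q, q, if_neg (by omega), if_neg (by omega)]

theorem q_succ_succ (hs : s ≤ N) (hl : 1 ≤ l) : q θ (N + 1) s (l + 1) = θ * q θ N s l := by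
  by_cases h : l = N - s + 1
  · rw [q, q, if_pos (by omega), if_pos h, show N + 1 - s = N - s + 1 by omega, pow_succ']
  · rw [q, q, if_neg (by omega), if_neg h, show l + 1 - 1 = l - 1 + 1 by omega, pow_succ']
    ring

theorem q_succ_top (hs : s ≤ N) :
    q θ (N + 1) s (N - s + 1) + q θ (N + 1) s (N - s + 2) = q θ N s (N - s + 1) := by
  rw [show N - s + 2 = N - s + 1 + 1 from rfl, q_succ_succ θ (l := N - s + 1) hs (by omega),
    q, q, if_neg (by omega), if_pos rfl, show N - s + 1 - 1 = N - s by omega]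
  ring

theorem origP_of_mem (h1 : 1 ≤ s) (h2 : s ≤ N) (h3 : 1 ≤ l) (h4 : l ≤ N - s + 1) :
    origP θ N (s, l) = c θ s * q θ N s l / N := by
  rw [origP, if_pos ⟨h1, h2, h4⟩, condL, if_neg (by omega)]
  ring

theorem origP_of_not_mem (h : ¬(1 ≤ s ∧ s ≤ N ∧ l ≤ N - s + 1)) : origP θ N (s, l) = 0 := by
  rw [origP, if_neg h]

theorem mem_of_origP_ne_zero {p : ℕ × ℕ} (h : origP θ N p ≠ 0) :
    1 ≤ p.1 ∧ p.1 ≤ N ∧ p.2 ≤ N - p.1 + 1 :=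
  of_not_not fun hp => h (origP_of_not_mem θ hp)

def restrictInitial (N : ℕ) (p : ℕ × ℕ) : ℕ × ℕ := (p.1, min p.2 (N - p.1 + 1))

def restrictTerminal (p : ℕ × ℕ) : ℕ × ℕ := (max p.1 2 - 1, p.1 + p.2 - max p.1 2)

theorem sum_origP_restrictInitial_fiber {x : ℕ × ℕ} (hx : x ∈ Icc 1 N ×ˢ Icc 1 N) :
    ∑ p ∈ Icc 1 (N + 1) ×ˢ Icc 0 (N + 1),
      (if (1 ≤ p.2 ∧ p.1 ≤ N) ∧ restrictInitial N p = x then origP θ (N + 1) p else 0)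
      = N / (N + 1) * origP θ N x := by
  obtain ⟨s, l⟩ := x
  simp only [mem_product, mem_Icc] at hx
  have hN : (N : ℝ) ≠ 0 := Nat.cast_ne_zero.2 (by omega)
  rw [← sum_filter]
  rcases lt_trichotomy l (N - s + 1) with hl | rfl | hl
  · have hfiber : {p ∈ Icc 1 (N + 1) ×ˢ Icc 0 (N + 1) |
        (1 ≤ p.2 ∧ p.1 ≤ N) ∧ restrictInitial N p = (s, l)} = {(s, l)} := by
      ext ⟨a, b⟩
      simp only [mem_filter, mem_product, mem_Icc, mem_singleton, restrictInitial, Prod.mk.injEq]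
      omega
    rw [hfiber, sum_singleton, origP_of_mem θ (by omega) (by omega) (by omega) (by omega),
      origP_of_mem θ (by omega) (by omega) (by omega) (by omega), q_succ_of_lt θ hl]
    push_cast
    field_simp
  · have hsupport : {(s, N - s + 1), (s, N - s + 2)} ⊆ {p ∈ Icc 1 (N + 1) ×ˢ Icc 0 (N + 1) |
        (1 ≤ p.2 ∧ p.1 ≤ N) ∧ restrictInitial N p = (s, N - s + 1)} := by
      intro p hp
      simp only [mem_insert, mem_singleton] at hp
      rcases hp with rfl | rfl <;>
        simp only [mem_filter, mem_product, mem_Icc, restrictInitial, Prod.mk.injEq,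
          true_and] <;> omega
    rw [← sum_subset hsupport fun p hp hpS => origP_of_not_mem θ ?_]
    swap
    · simp only [mem_filter, mem_product, mem_Icc, mem_insert, mem_singleton, restrictInitial,
        Prod.ext_iff] at hp hpS
      omega
    rw [sum_pair (by simp), origP_of_mem θ (by omega) (by omega) (by omega) (by omega),
      origP_of_mem θ (by omega) (by omega) (by omega) (by omega),
      origP_of_mem θ (by omega) (by omega) (by omega) le_rfl, ← q_succ_top θ (by omega : s ≤ N)]
    push_cast
    field_simp
  · have hfiber : {p ∈ Icc 1 (N + 1) ×ˢ Icc 0 (N + 1) |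
        (1 ≤ p.2 ∧ p.1 ≤ N) ∧ restrictInitial N p = (s, l)} = ∅ := by
      ext ⟨a, b⟩
      simp only [mem_filter, mem_product, mem_Icc, restrictInitial, Prod.mk.injEq,
        notMem_empty, iff_false]
      omega
    rw [hfiber, sum_empty, origP_of_not_mem θ (by omega), mul_zero]

theorem sum_origP_restrictTerminal_fiber {x : ℕ × ℕ} (hx : x ∈ Icc 1 N ×ˢ Icc 1 N) :
    ∑ p ∈ Icc 1 (N + 1) ×ˢ Icc 0 (N + 1),
      (if (1 ≤ p.2 ∧ 2 ≤ p.1 + p.2 - 1) ∧ restrictTerminal p = x then origP θ (N + 1) p else 0)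
      = N / (N + 1) * origP θ N x := by
  obtain ⟨s, l⟩ := x
  simp only [mem_product, mem_Icc] at hx
  have hN : (N : ℝ) ≠ 0 := Nat.cast_ne_zero.2 (by omega)
  rw [← sum_filter]
  rcases (by omega : s = 1 ∨ 2 ≤ s) with rfl | hs
  · have hfiber : {p ∈ Icc 1 (N + 1) ×ˢ Icc 0 (N + 1) |
        (1 ≤ p.2 ∧ 2 ≤ p.1 + p.2 - 1) ∧ restrictTerminal p = (1, l)} = {(2, l), (1, l + 1)} := by
      ext ⟨a, b⟩
      simp only [mem_filter, mem_product, mem_Icc, mem_insert, mem_singleton, restrictTerminal,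
        Prod.mk.injEq]
      omega
    rw [hfiber, sum_pair (by simp), origP_of_mem θ (by omega) (by omega) (by omega) (by omega),
      origP_of_mem θ (by omega) (by omega) (by omega) (by omega),
      origP_of_mem θ (by omega) (by omega) (by omega) (by omega), q_succ_shift θ (by omega),
      q_succ_succ θ (by omega) (by omega), c, c, if_neg (by omega), if_pos rfl]
    push_cast
    field_simp
    ring
  · have hfiber : {p ∈ Icc 1 (N + 1) ×ˢ Icc 0 (N + 1) |
        (1 ≤ p.2 ∧ 2 ≤ p.1 + p.2 - 1) ∧ restrictTerminal p = (s, l)} = {(s + 1, l)} := by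
      ext ⟨a, b⟩
      simp only [mem_filter, mem_product, mem_Icc, mem_singleton, restrictTerminal,
        Prod.mk.injEq]
      omega
    rw [hfiber, sum_singleton]
    by_cases hl : l ≤ N - s + 1
    · rw [origP_of_mem θ (by omega) (by omega) (by omega) (by omega),
        origP_of_mem θ (by omega) (by omega) (by omega) (by omega), q_succ_shift θ (by omega),
        c_succ θ hs]
      push_cast
      field_simp
    · rw [origP_of_not_mem θ (by omega), origP_of_not_mem θ (by omega), mul_zero]

end OneDimension

section Restriction

variable {ι : Type*} [DecidableEq ι] (N : ι → ℕ) (d' : ι) (initial : Bool)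

def restriction (d : ι) : ℕ × ℕ → ℕ × ℕ :=
  if d = d' then (if initial then restrictInitial (N d) else restrictTerminal) else id

/- The theorem's conditions on a single coordinate `p = f d`, reducible so that they match its
inline expressions. -/
abbrev RestrictionNonempty (d : ι) (p : ℕ × ℕ) : Prop :=
  1 ≤ p.2 ∧ (d = d' → if initial then p.1 ≤ N d' else 2 ≤ p.1 + p.2 - 1)

abbrev RestrictsTo (d : ι) (p x : ℕ × ℕ) : Prop :=
  if d = d' then
    (if initial then p.1 = x.1 ∧ min p.2 (N d - p.1 + 1) = x.2
      else max p.1 2 - 1 = x.1 ∧ p.1 + p.2 - max p.1 2 = x.2)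
  else p = x

theorem restrictsTo_iff {d : ι} {p x : ℕ × ℕ} :
    RestrictsTo N d' initial d p x ↔ restriction N d' initial d p = x := by
  unfold RestrictsTo restriction
  split_ifs <;> simp [restrictInitial, restrictTerminal, Prod.ext_iff]

variable (θ : ℝ) {M : ℕ} {d : ι}

theorem sum_origP_restrictsTo (hM : M = if d = d' then N d + 1 else N d) {x : ℕ × ℕ}
    (hx : x ∈ Icc 1 (N d) ×ˢ Icc 1 (N d)) :
    ∑ p ∈ Icc 1 M ×ˢ Icc 0 M,
      (if RestrictionNonempty N d' initial d p ∧ RestrictsTo N d' initial d p x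
        then origP θ M p else 0)
      = (if d = d' then (N d : ℝ) / (N d + 1) else 1) * origP θ (N d) x := by
  simp_rw [restrictsTo_iff]
  by_cases hd : d = d'
  · subst hd hM
    cases initial
    · simpa [restriction, RestrictionNonempty] using sum_origP_restrictTerminal_fiber θ hx
    · simpa [restriction, RestrictionNonempty] using sum_origP_restrictInitial_fiber θ hx
  · simp only [if_neg hd, one_mul] at hM ⊢
    subst hM
    have hres : restriction N d' initial d = id := if_neg hd
    simp only [mem_product, mem_Icc] at hx
    rw [hres, sum_eq_single_of_mem x (by simp only [mem_product, mem_Icc]; omega)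
      fun p _ hpx => if_neg fun h => hpx h.2, if_pos ⟨⟨by omega, fun h => absurd h hd⟩, rfl⟩]

theorem sum_origP_restrictionNonempty (hM : M = if d = d' then N d + 1 else N d) :
    ∑ p ∈ Icc 1 M ×ˢ Icc 0 M,
      (if RestrictionNonempty N d' initial d p then origP θ M p else 0)
      = (if d = d' then (N d : ℝ) / (N d + 1) else 1) *
          ∑ x ∈ Icc 1 (N d) ×ˢ Icc 1 (N d), origP θ (N d) x := by
  refine sum_ite_eq_mul_sum_of_fibers (restriction N d' initial d) _ (fun p hp hE hw => ?_)
    fun x hx => by simpa only [restrictsTo_iff] using sum_origP_restrictsTo N d' initial θ hM hx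
  obtain ⟨hl, hboundary⟩ := hE
  have hsupp := mem_of_origP_ne_zero θ hw
  simp only [mem_product, mem_Icc] at hp ⊢
  by_cases hd : d = d'
  · subst hd
    simp only [↓reduceIte, forall_const] at hM hboundary
    cases initial <;>
      simp only [restriction, restrictInitial, restrictTerminal, ↓reduceIte,
        Bool.false_eq_true] at hboundary ⊢ <;>
      omega
  · simp only [if_neg hd] at hM
    simp only [restriction, if_neg hd, id]
    omega

end Restriction

theorem spp_position_self_consistent_multidim_general (θ : ℝ)
    (D : ℕ) (N : Fin D → ℕ)
    (d' : Fin D) (initial : Bool) (M : Fin D → ℕ)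
    (hM : ∀ d, M d = if d = d' then N d + 1 else N d)
    (g : Fin D → ℕ × ℕ)
    (hg : ∀ d, 1 ≤ (g d).1 ∧ (g d).1 ≤ N d ∧ 1 ≤ (g d).2 ∧ (g d).2 ≤ N d - (g d).1 + 1) :
    (∑ f ∈ Fintype.piFinset (fun d => Finset.Icc 1 (M d) ×ˢ Finset.Icc 0 (M d)),
        if (∀ d, 1 ≤ (f d).2 ∧
              (d = d' → if initial then (f d).1 ≤ N d' else 2 ≤ (f d).1 + (f d).2 - 1)) ∧
           (∀ d, if d = d' then
                (if initial then
                    (f d).1 = (g d).1 ∧ min (f d).2 (N d - (f d).1 + 1) = (g d).2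
                  else
                    max (f d).1 2 - 1 = (g d).1 ∧
                      (f d).1 + (f d).2 - max (f d).1 2 = (g d).2)
              else f d = g d) then
          ∏ d, origP θ (M d) (f d)
        else 0) /
    (∑ f ∈ Fintype.piFinset (fun d => Finset.Icc 1 (M d) ×ˢ Finset.Icc 0 (M d)),
        if (∀ d, 1 ≤ (f d).2 ∧
              (d = d' → if initial then (f d).1 ≤ N d' else 2 ≤ (f d).1 + (f d).2 - 1)) then
          ∏ d, origP θ (M d) (f d)
        else 0)
      = (∏ d, origP θ (N d) (g d)) /
        (∑ f ∈ Fintype.piFinset (fun d => Finset.Icc 1 (N d) ×ˢ Finset.Icc 1 (N d)),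
          ∏ d, origP θ (N d) (f d)) := by
  have hg_mem (d : Fin D) : g d ∈ Icc 1 (N d) ×ˢ Icc 1 (N d) := by
    have := hg d
    simp only [mem_product, mem_Icc]
    omega
  have hfactor (d : Fin D) : (if d = d' then (N d : ℝ) / (N d + 1) else 1) ≠ 0 := by
    have : (0 : ℝ) < N d := Nat.cast_pos.2 (by have := hg d; omega)
    split_ifs <;> positivity
  simp only [← forall_and]
  rw [sum_piFinset_ite_forall _ fun d (p : ℕ × ℕ) =>
      RestrictionNonempty N d' initial d p ∧ RestrictsTo N d' initial d p (g d),
    sum_piFinset_ite_forall _ (RestrictionNonempty N d' initial), ← prod_univ_sum,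
    prod_congr rfl fun d _ => sum_origP_restrictsTo N d' initial θ (hM d) (hg_mem d),
    prod_congr rfl fun d _ => sum_origP_restrictionNonempty N d' initial θ (hM d),
    prod_mul_distrib, prod_mul_distrib]
  exact mul_div_mul_left _ _ (prod_ne_zero_iff.2 fun d _ => hfactor d)

/-- Proposition 3, multi-dimensional version: `Y` has sizes `M_d` (`M_d = N_d` for
`d ≠ d'`, `M_{d'} = N_{d'}+1`), and `X ⊆ Y` agrees in all dimensions `d ≠ d'` and, in
dimension `d'`, consists of the first (`initial = true`) or last (`initial = false`)
`N_{d'}` positions.  A candidate patch on `Y` is restricted coordinatewise to `X`: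
in dimension `d ≠ d'` the restriction is the identity (nonempty iff `l_d ≥ 1`); in
dimension `d'`, for the initial-boundary case the restriction is
`(s, min l (N_{d'}−s+1))` (nonempty iff `l ≥ 1 ∧ s ≤ N_{d'}`), and for the
terminal-boundary case it is `(max s 2 − 1, s + l − max s 2)` (nonempty iff
`l ≥ 1 ∧ s + l − 1 ≥ 2`).  Then for every admissible target patch `g` on `X`:
`P_Y(π⁻¹(g) | restriction nonempty in every dimension) = P_X(g | all side-lengths positive)`. -/
theorem spp_position_self_consistent_multidim (θ : ℝ) (hθ0 : 0 ≤ θ) (hθ1 : θ ≤ 1)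
    (D : ℕ) (hD : 0 < D) (N : Fin D → ℕ) (hN : ∀ d, 0 < N d)
    (d' : Fin D) (initial : Bool) (M : Fin D → ℕ)
    (hM : ∀ d, M d = if d = d' then N d + 1 else N d)
    (g : Fin D → ℕ × ℕ)
    (hg : ∀ d, 1 ≤ (g d).1 ∧ (g d).1 ≤ N d ∧ 1 ≤ (g d).2 ∧ (g d).2 ≤ N d - (g d).1 + 1) :
    (∑ f ∈ Fintype.piFinset (fun d => Finset.Icc 1 (M d) ×ˢ Finset.Icc 0 (M d)),
        if (∀ d, 1 ≤ (f d).2 ∧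
              (d = d' → if initial then (f d).1 ≤ N d' else 2 ≤ (f d).1 + (f d).2 - 1)) ∧
           (∀ d, if d = d' then
                (if initial then
                    (f d).1 = (g d).1 ∧ min (f d).2 (N d - (f d).1 + 1) = (g d).2
                  else
                    max (f d).1 2 - 1 = (g d).1 ∧
                      (f d).1 + (f d).2 - max (f d).1 2 = (g d).2)
              else f d = g d) then
          ∏ d, origP θ (M d) (f d)
        else 0) /
    (∑ f ∈ Fintype.piFinset (fun d => Finset.Icc 1 (M d) ×ˢ Finset.Icc 0 (M d)),
        if (∀ d, 1 ≤ (f d).2 ∧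
              (d = d' → if initial then (f d).1 ≤ N d' else 2 ≤ (f d).1 + (f d).2 - 1)) then
          ∏ d, origP θ (M d) (f d)
        else 0)
      = (∏ d, origP θ (N d) (g d)) /
        (∑ f ∈ Fintype.piFinset (fun d => Finset.Icc 1 (N d) ×ˢ Finset.Icc 1 (N d)),
          ∏ d, origP θ (N d) (f d)) :=
  spp_position_self_consistent_multidim_general θ D N d' initial M hM g hg
end

section
/- Let θ ∈ [0,1] be real and N a positive integer. Under the original-construction candidate-patch distribution on dimension size N+1, conditional on the event that the patch interval {s,…,s+l−1} intersects X = {2,…,N+1} (i.e., l ≥ 1 and s+l−1 ≥ 2), the initial position satisfies P(s = 1 | intersects X) = θ/(θ+(1−θ)·N) and P(s = n | intersects X) = (1−θ)/(θ+(1−θ)·N) for every n with 2 ≤ n ≤ N+1. -/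
/-!
Given its start `s`, the side length of a patch follows a truncated geometric law whose masses
on `{1, …, N - s + 1}` sum to `c θ s`. For `s ≥ 2` every nonempty patch meets `X`, so the start
`s` carries mass `(1 - θ) / (N + 1)` of the event; for `s = 1` the patch meets `X` iff `l ≥ 2`,
which removes only the term `q θ (N + 1) 1 1 = 1 - θ` (as `N ≥ 1`, `l = 1` is not the truncated
top value) and leaves `θ / (N + 1)`. The event therefore has mass `(θ + (1 - θ) N) / (N + 1)`, and
the common factor `1 / (N + 1)` cancels in both ratios.
-/

open Finset

theorem sum_Icc_pow_pred_mul_one_sub (θ : ℝ) (m : ℕ) :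
    ∑ l ∈ Icc 1 m, θ ^ (l - 1) * (1 - θ) = 1 - θ ^ m := by
  induction m with
  | zero => simp
  | succ m ih =>
    rw [sum_Icc_succ_top (by omega), ih, Nat.add_sub_cancel]
    ring

theorem sum_q_Icc_eq_one (θ : ℝ) (N s : ℕ) : ∑ l ∈ Icc 1 (N - s + 1), q θ N s l = 1 := by
  have hq : ∀ l ∈ Icc 1 (N - s), q θ N s l = θ ^ (l - 1) * (1 - θ) := fun l hl ↦
    if_neg (by rw [mem_Icc] at hl; omega)
  rw [sum_Icc_succ_top (by omega), sum_congr rfl hq, sum_Icc_pow_pred_mul_one_sub, q, if_pos rfl]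
  ring

theorem sum_q_one_Icc_two_eq (θ : ℝ) {N : ℕ} (hN : 2 ≤ N) : ∑ l ∈ Icc 2 N, q θ N 1 l = θ := by
  have h := sum_q_Icc_eq_one θ N 1
  rw [Nat.sub_add_cancel (by omega), ← insert_Icc_add_one_left_eq_Icc (by omega),
    sum_insert (by simp), q, if_neg (by omega)] at h
  norm_num at h
  linarith

theorem ite_hits_origP_eq (θ : ℝ) {N s : ℕ} (hs : 1 ≤ s) (hsN : s ≤ N) (l : ℕ) :
    (if 1 ≤ l ∧ 2 ≤ s + l - 1 then origP θ N (s, l) else 0) =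
      if l ∈ Icc (if s = 1 then 2 else 1) (N - s + 1) then
        1 / (N : ℝ) * (c θ s * q θ N s l) else 0 := by
  unfold origP condL
  simp only [mem_Icc]
  split_ifs <;> first | rfl | omega

theorem sum_hits_origP_column (θ : ℝ) {N s : ℕ} (hN : 2 ≤ N) (hs : 1 ≤ s) (hsN : s ≤ N) :
    ∑ l ∈ Icc 0 N, (if 1 ≤ l ∧ 2 ≤ s + l - 1 then origP θ N (s, l) else 0) =
      1 / (N : ℝ) * (if s = 1 then θ else 1 - θ) := by
  have hsub : Icc (if s = 1 then 2 else 1) (N - s + 1) ⊆ Icc 0 N := by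
    intro l; simp only [mem_Icc]; omega
  rw [sum_congr rfl fun l _ ↦ ite_hits_origP_eq θ hs hsN l, sum_ite_mem, inter_eq_right.mpr hsub,
    ← mul_sum, ← mul_sum]
  split_ifs with h
  · subst h
    rw [c, if_pos rfl, one_mul, Nat.sub_add_cancel (by omega), sum_q_one_Icc_two_eq θ hN]
  · rw [c, if_neg h, sum_q_Icc_eq_one, mul_one]

theorem sum_product_ite_fst_eq_and {α β M : Type*} [DecidableEq α] [AddCommMonoid M]
    (A : Finset α) (B : Finset β) (P : α × β → Prop) [DecidablePred P] (f : α × β → M) (a : α) :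
    ∑ p ∈ A ×ˢ B, (if p.1 = a ∧ P p then f p else 0) =
      if a ∈ A then ∑ b ∈ B, (if P (a, b) then f (a, b) else 0) else 0 := by
  rw [sum_product, ← sum_ite_eq' A a fun x ↦ ∑ b ∈ B, if P (x, b) then f (x, b) else 0]
  refine sum_congr rfl fun x _ ↦ ?_
  rcases eq_or_ne x a with rfl | hx
  · simp only [true_and, if_true]
  · simp only [hx, false_and, if_false, sum_const_zero]

theorem sum_hits_origP (θ : ℝ) {N : ℕ} (hN : 0 < N) :
    ∑ p ∈ Icc 1 (N + 1) ×ˢ Icc 0 (N + 1),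
        (if 1 ≤ p.2 ∧ 2 ≤ p.1 + p.2 - 1 then origP θ (N + 1) p else 0) =
      1 / ((N + 1 : ℕ) : ℝ) * (θ + (1 - θ) * N) := by
  have hcol : ∀ s ∈ Icc 1 (N + 1), ∑ l ∈ Icc 0 (N + 1),
      (if 1 ≤ l ∧ 2 ≤ s + l - 1 then origP θ (N + 1) (s, l) else 0) =
        1 / ((N + 1 : ℕ) : ℝ) * (if s = 1 then θ else 1 - θ) := fun s hs ↦
    sum_hits_origP_column θ (by omega) (mem_Icc.mp hs).1 (mem_Icc.mp hs).2
  rw [sum_product, sum_congr rfl hcol, ← mul_sum, ← insert_Icc_add_one_left_eq_Icc (by omega),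
    sum_insert (by simp), if_pos rfl,
    sum_congr rfl fun s hs ↦ if_neg (by rw [mem_Icc] at hs; omega), sum_const, Nat.card_Icc,
    show N + 1 + 1 - (1 + 1) = N by omega, nsmul_eq_mul]
  ring

theorem spp_conditional_initial_position_general (θ : ℝ)
    (N : ℕ) (hN : 0 < N) :
    ((∑ p ∈ Finset.Icc 1 (N + 1) ×ˢ Finset.Icc 0 (N + 1),
        if p.1 = 1 ∧ 1 ≤ p.2 ∧ 2 ≤ p.1 + p.2 - 1 then origP θ (N + 1) p else 0) /
     (∑ p ∈ Finset.Icc 1 (N + 1) ×ˢ Finset.Icc 0 (N + 1),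
        if 1 ≤ p.2 ∧ 2 ≤ p.1 + p.2 - 1 then origP θ (N + 1) p else 0)
      = θ / (θ + (1 - θ) * N)) ∧
    (∀ n : ℕ, 2 ≤ n → n ≤ N + 1 →
      (∑ p ∈ Finset.Icc 1 (N + 1) ×ˢ Finset.Icc 0 (N + 1),
          if p.1 = n ∧ 1 ≤ p.2 ∧ 2 ≤ p.1 + p.2 - 1 then origP θ (N + 1) p else 0) /
      (∑ p ∈ Finset.Icc 1 (N + 1) ×ˢ Finset.Icc 0 (N + 1),
          if 1 ≤ p.2 ∧ 2 ≤ p.1 + p.2 - 1 then origP θ (N + 1) p else 0)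
        = (1 - θ) / (θ + (1 - θ) * N)) := by
  have hnum : ∀ n, 1 ≤ n → n ≤ N + 1 →
      ∑ p ∈ Icc 1 (N + 1) ×ˢ Icc 0 (N + 1),
          (if p.1 = n ∧ 1 ≤ p.2 ∧ 2 ≤ p.1 + p.2 - 1 then origP θ (N + 1) p else 0) =
        1 / ((N + 1 : ℕ) : ℝ) * (if n = 1 then θ else 1 - θ) := fun n hn1 hnN ↦ by
    rw [sum_product_ite_fst_eq_and, if_pos (mem_Icc.mpr ⟨hn1, hnN⟩)]
    exact sum_hits_origP_column θ (by omega) hn1 hnN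
  have hscale : 1 / ((N + 1 : ℕ) : ℝ) ≠ 0 := by positivity
  refine ⟨?_, fun n hn2 hnN ↦ ?_⟩
  · rw [hnum 1 le_rfl (by omega), sum_hits_origP θ hN, if_pos rfl, mul_div_mul_left _ _ hscale]
  · rw [hnum n (by omega) hnN, sum_hits_origP θ hN, if_neg (by omega),
      mul_div_mul_left _ _ hscale]

/-- Under the original-construction candidate-patch distribution on size `N+1`,
conditional on the patch interval `{s,…,s+l−1}` intersecting `X = {2,…,N+1}`
(i.e. `l ≥ 1` and `s+l−1 ≥ 2`), the initial position satisfies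
`P(s = 1 | ·) = θ/(θ+(1−θ)·N)` and `P(s = n | ·) = (1−θ)/(θ+(1−θ)·N)` for
every `2 ≤ n ≤ N+1`. -/
theorem spp_conditional_initial_position (θ : ℝ) (hθ0 : 0 ≤ θ) (hθ1 : θ ≤ 1)
    (N : ℕ) (hN : 0 < N) :
    ((∑ p ∈ Finset.Icc 1 (N + 1) ×ˢ Finset.Icc 0 (N + 1),
        if p.1 = 1 ∧ 1 ≤ p.2 ∧ 2 ≤ p.1 + p.2 - 1 then origP θ (N + 1) p else 0) /
     (∑ p ∈ Finset.Icc 1 (N + 1) ×ˢ Finset.Icc 0 (N + 1),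
        if 1 ≤ p.2 ∧ 2 ≤ p.1 + p.2 - 1 then origP θ (N + 1) p else 0)
      = θ / (θ + (1 - θ) * N)) ∧
    (∀ n : ℕ, 2 ≤ n → n ≤ N + 1 →
      (∑ p ∈ Finset.Icc 1 (N + 1) ×ˢ Finset.Icc 0 (N + 1),
          if p.1 = n ∧ 1 ≤ p.2 ∧ 2 ≤ p.1 + p.2 - 1 then origP θ (N + 1) p else 0) /
      (∑ p ∈ Finset.Icc 1 (N + 1) ×ˢ Finset.Icc 0 (N + 1),
          if 1 ≤ p.2 ∧ 2 ≤ p.1 + p.2 - 1 then origP θ (N + 1) p else 0)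
        = (1 - θ) / (θ + (1 - θ) * N)) :=
  spp_conditional_initial_position_general θ N hN
end
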